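/- Let G be a nontrivial finite group, m > 1, and x ∈ G with x ≠ e. Let I_m(x) = { x_{[k,l)} : 1 ≤ k < l ≤ m+1 } ∪ { x^{-1}_{[k,l)} : 1 ≤ k < l ≤ m+1 } ⊆ G^m. Then |I_m(x)| = m(m+1)/2 if x has order 2, and |I_m(x)| = m(m+1) if x has order greater than 2. -/
import Mathlib


namespace CayleyStmt9

variable {G : Type*}

def intvl [Group G] (m : ℕ) (x : G) (k l : ℕ) : Fin m → G :=
  fun i => if k ≤ i.1 + 1 ∧ i.1 + 1 < l then x else 1

/-- `I_m(x) = { x_{[k,l)} } ∪ { x⁻¹_{[k,l)} }` over all `1 ≤ k < l ≤ m+1`. -/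
def cI [Group G] (m : ℕ) (x : G) : Set (Fin m → G) :=
  {v | ∃ k l : ℕ, 1 ≤ k ∧ k < l ∧ l ≤ m + 1 ∧
    (v = intvl m x k l ∨ v = intvl m x⁻¹ k l)}

def S (m : ℕ) : Finset (ℕ × ℕ) :=
  (Finset.range (m+2) ×ˢ Finset.range (m+2)).filter fun p => 1 ≤ p.1 ∧ p.1 < p.2 ∧ p.2 ≤ m+1

lemma card_S (m : ℕ) : (S m).card = m * (m + 1) / 2 := by
  have hS : S m = (Finset.range (m+2)).biUnion
      (fun l => (Finset.Ico 1 l).image fun k => (k, l)) := by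
    ext p
    simp only [S, Finset.mem_filter, Finset.mem_product, Finset.mem_range,
      Finset.mem_biUnion, Finset.mem_image, Finset.mem_Ico]
    constructor
    · rintro ⟨⟨h1, h2⟩, h3, h4, h5⟩
      exact ⟨p.2, h2, p.1, ⟨h3, h4⟩, rfl⟩
    · rintro ⟨l, hl, k, ⟨hk1, hk2⟩, rfl⟩
      exact ⟨⟨by omega, hl⟩, hk1, hk2, by omega⟩
  rw [hS, Finset.card_biUnion]
  · have heach : ∀ l, ((Finset.Ico 1 l).image fun k => (k, l)).card = l - 1 := by
      intro l
      rw [Finset.card_image_of_injective _ (fun a b h => (Prod.mk.injEq _ _ _ _).mp h |>.1),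
        Nat.card_Ico]
    simp only [heach]
    rw [Finset.sum_range_succ']
    simp only [Nat.add_sub_cancel, Nat.zero_sub, Nat.add_zero]
    rw [Finset.sum_range_id]
    simp [Nat.mul_comm]
  · intro l1 _ l2 _ hne
    simp only [Finset.disjoint_left, Finset.mem_image]
    rintro p ⟨k, _, rfl⟩ ⟨k', _, h⟩
    exact hne (by cases h; rfl)

lemma intvl_inj [Group G] {m : ℕ} {x : G} (hx : x ≠ 1) {k l k' l' : ℕ}
    (hk : 1 ≤ k) (hkl : k < l) (hl : l ≤ m + 1)
    (hk' : 1 ≤ k') (hkl' : k' < l') (hl' : l' ≤ m + 1)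
    (h : intvl m x k l = intvl m x k' l') : k = k' ∧ l = l' := by
  have H : ∀ i : Fin m, ((k ≤ i.1 + 1 ∧ i.1 + 1 < l) ↔ (k' ≤ i.1 + 1 ∧ i.1 + 1 < l')) := by
    intro i
    have hi := congrFun h i
    simp only [intvl] at hi
    by_cases h1 : k ≤ i.1 + 1 ∧ i.1 + 1 < l <;>
      by_cases h2 : k' ≤ i.1 + 1 ∧ i.1 + 1 < l' <;>
      simp [h1, h2] at hi ⊢ <;> tauto
  have H' : ∀ j : ℕ, 1 ≤ j → j ≤ m → ((k ≤ j ∧ j < l) ↔ (k' ≤ j ∧ j < l')) := by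
    intro j hj1 hj2
    have := H ⟨j - 1, by omega⟩
    simp only [Fin.val_mk] at this
    have hj : j - 1 + 1 = j := by omega
    rw [hj] at this
    exact this
  have h1 := (H' k (by omega) (by omega)).mp ⟨by omega, by omega⟩
  have h2 := (H' k' (by omega) (by omega)).mpr ⟨by omega, by omega⟩
  have h3 := (H' (l - 1) (by omega) (by omega)).mp ⟨by omega, by omega⟩
  have h4 := (H' (l' - 1) (by omega) (by omega)).mpr ⟨by omega, by omega⟩
  omega

lemma intvl_ne [Group G] {m : ℕ} {x y : G} (hxy : x ≠ y) (hx1 : x ≠ 1) {k l k' l' : ℕ}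
    (hk : 1 ≤ k) (hkl : k < l) (hl : l ≤ m + 1) :
    intvl m x k l ≠ intvl m y k' l' := by
  intro h
  have hi := congrFun h ⟨k - 1, by omega⟩
  simp only [intvl] at hi
  rw [if_pos (by constructor <;> omega)] at hi
  by_cases h2 : k' ≤ (k - 1 : ℕ) + 1 ∧ (k - 1 : ℕ) + 1 < l' <;> simp [h2] at hi <;> tauto

lemma cI_eq [Group G] (m : ℕ) (x : G) :
    cI m x = (fun p : ℕ × ℕ => intvl m x p.1 p.2) '' ↑(S m) ∪
             (fun p : ℕ × ℕ => intvl m x⁻¹ p.1 p.2) '' ↑(S m) := by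
  ext v
  simp only [cI, Set.mem_setOf_eq, Set.mem_union, Set.mem_image, Finset.mem_coe, S,
    Finset.mem_filter, Finset.mem_product, Finset.mem_range, Prod.exists]
  constructor
  · rintro ⟨k, l, h1, h2, h3, h4 | h4⟩
    · exact Or.inl ⟨k, l, ⟨⟨by omega, by omega⟩, h1, h2, h3⟩, h4.symm⟩
    · exact Or.inr ⟨k, l, ⟨⟨by omega, by omega⟩, h1, h2, h3⟩, h4.symm⟩
  · rintro (⟨k, l, ⟨_, h1, h2, h3⟩, h4⟩ | ⟨k, l, ⟨_, h1, h2, h3⟩, h4⟩)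
    exacts [⟨k, l, h1, h2, h3, Or.inl h4.symm⟩, ⟨k, l, h1, h2, h3, Or.inr h4.symm⟩]

lemma ncard_img [Group G] (m : ℕ) {x : G} (hx : x ≠ 1) :
    ((fun p : ℕ × ℕ => intvl m x p.1 p.2) '' ↑(S m)).ncard = m * (m + 1) / 2 := by
  rw [Set.ncard_image_of_injOn, Set.ncard_coe_finset, card_S]
  rintro ⟨k, l⟩ hkl ⟨k', l'⟩ hkl' h
  simp only [Finset.mem_coe, S, Finset.mem_filter, Finset.mem_product, Finset.mem_range] at hkl hkl'
  obtain ⟨he1, he2⟩ := intvl_inj hx hkl.2.1 hkl.2.2.1 hkl.2.2.2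
    hkl'.2.1 hkl'.2.2.1 hkl'.2.2.2 h
  rw [Prod.mk.injEq]
  exact ⟨he1, he2⟩

/-- `|I_m(x)| = m(m+1)/2` if `x` has order `2`, and `m(m+1)` if the order of
`x` is greater than `2`. -/
theorem card_I [Group G] [Fintype G] (m : ℕ) (hm : 1 < m) (x : G) (hx : x ≠ 1) :
    (orderOf x = 2 → (cI m x).ncard = m * (m + 1) / 2) ∧
    (2 < orderOf x → (cI m x).ncard = m * (m + 1)) := by
  constructor
  · intro h2
    have hxx : x * x = 1 := by
      rw [← pow_two, ← h2, pow_orderOf_eq_one]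
    have hinv : x⁻¹ = x := inv_eq_of_mul_eq_one_left hxx
    rw [cI_eq, hinv, Set.union_self, ncard_img m hx]
  · intro h2
    have hne : x ≠ x⁻¹ := by
      intro h
      have hxx : x ^ 2 = 1 := by rw [pow_two]; nth_rewrite 2 [h]; simp
      have := orderOf_dvd_of_pow_eq_one hxx
      have := Nat.le_of_dvd (by norm_num) this
      omega
    have hinv1 : x⁻¹ ≠ 1 := inv_ne_one.mpr hx
    rw [cI_eq]
    rw [Set.ncard_union_eq]
    · rw [ncard_img m hx, ncard_img m hinv1]
      obtain ⟨c, hc⟩ := Nat.even_mul_succ_self m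
      omega
    · rw [Set.disjoint_left]
      rintro v ⟨⟨k, l⟩, hkl, rfl⟩ ⟨⟨k', l'⟩, hkl', h⟩
      simp only [Finset.mem_coe, S, Finset.mem_filter, Finset.mem_product,
        Finset.mem_range] at hkl hkl'
      exact intvl_ne hne hx hkl.2.1 hkl.2.2.1 hkl.2.2.2 h.symm

end CayleyStmt9
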